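/- arXiv:1804.07485 — 4 statements merged into one kernel-verified Lean document; each statement's English description precedes it below -/
import Mathlib

section
/- Let K ⊂ ℝ^N be a compact set, let J ∈ L¹(ℝ^N) be a non-negative kernel, let k > 0, and let w : ℝ^N \ K → ℝ be continuous and bounded. Suppose that for every x ∈ ℝ^N \ K one has ∫_{ℝ^N \ K} J(x−y)(w(y)−w(x)) dy ≥ k·w(x), and that limsup_{|x|→∞} w(x) ≤ 0. Then w(x) ≤ 0 for every x ∈ ℝ^N \ K. -/
/-!
Let `s = sup w`. Since `J ≥ 0`, the nonlocal term at `z` is at most `‖J‖₁ (s - w z)`, so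
`k w ≤ ‖J‖₁ (s - w)` on `ℝ^N \ K`. Hence `‖J‖₁ s / (k + ‖J‖₁)` is an upper bound of `w`, and
comparing it with the least upper bound `s` gives `k s ≤ 0`.
-/

open MeasureTheory Filter Set

theorem nonpos_of_isLUB_of_mul_le_mul_sub {ι : Type*} {S : Set ι} {w : ι → ℝ} {s k C : ℝ}
    (hk : 0 < k) (hC : 0 ≤ C) (hs : IsLUB (w '' S) s)
    (h : ∀ z ∈ S, k * w z ≤ C * (s - w z)) : s ≤ 0 := by
  have hkC : 0 < k + C := by linarith
  have hub : C * s / (k + C) ∈ upperBounds (w '' S) := by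
    rintro _ ⟨z, hz, rfl⟩
    rw [le_div_iff₀ hkC]
    linarith [h z hz]
  have hle := hs.2 hub
  rw [le_div_iff₀ hkC] at hle
  nlinarith

section Kernel

variable {G : Type*} [AddGroup G] [MeasurableSpace G] [MeasurableAdd G] [MeasurableNeg G]
  {μ : Measure G} [μ.IsAddLeftInvariant] [μ.IsNegInvariant] {J : G → ℝ}

theorem setIntegral_comp_sub_left_le_integral (hJ : Integrable J μ) (hJ0 : ∀ z, 0 ≤ J z)
    (S : Set G) (x : G) : ∫ y in S, J (x - y) ∂μ ≤ ∫ z, J z ∂μ :=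
  calc ∫ y in S, J (x - y) ∂μ
      ≤ ∫ y, J (x - y) ∂μ :=
        setIntegral_le_integral (hJ.comp_sub_left x) (Eventually.of_forall fun _ => hJ0 _)
    _ = ∫ z, J z ∂μ := integral_sub_left_eq_self J μ x

theorem setIntegral_comp_sub_left_mul_le {S : Set G} {f : G → ℝ} {c : ℝ} (hS : MeasurableSet S)
    (hJ : Integrable J μ) (hJ0 : ∀ z, 0 ≤ J z) (hc : 0 ≤ c) (hf : ∀ y ∈ S, f y ≤ c) (x : G) :
    ∫ y in S, J (x - y) * f y ∂μ ≤ (∫ z, J z ∂μ) * c := by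
  have hbound : ∫ y in S, J (x - y) * f y ∂μ ≤ ∫ y in S, J (x - y) * c ∂μ := by
    by_cases hfi : Integrable (fun y => J (x - y) * f y) (μ.restrict S)
    · refine integral_mono_ae hfi ((hJ.comp_sub_left x).mul_const c).restrict ?_
      filter_upwards [ae_restrict_mem hS] with y hy
      exact mul_le_mul_of_nonneg_left (hf y hy) (hJ0 _)
    · rw [integral_undef hfi]
      exact integral_nonneg fun y => mul_nonneg (hJ0 _) hc
  calc ∫ y in S, J (x - y) * f y ∂μ
      ≤ ∫ y in S, J (x - y) * c ∂μ := hbound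
    _ = (∫ y in S, J (x - y) ∂μ) * c := integral_mul_const c _
    _ ≤ (∫ z, J z ∂μ) * c :=
        mul_le_mul_of_nonneg_right (setIntegral_comp_sub_left_le_integral hJ hJ0 S x) hc

end Kernel

theorem nonlocal_comparison_principle_general
    {N : ℕ}
    (K : Set (EuclideanSpace ℝ (Fin N))) (hK : IsCompact K)
    (J : EuclideanSpace ℝ (Fin N) → ℝ) (hJint : Integrable J) (hJ0 : ∀ z, 0 ≤ J z)
    (k : ℝ) (hk : 0 < k)
    (w : EuclideanSpace ℝ (Fin N) → ℝ)
    (M : ℝ) (hwb : ∀ x ∈ Kᶜ, |w x| ≤ M)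
    (hineq : ∀ x ∈ Kᶜ, k * w x ≤ ∫ y in Kᶜ, J (x - y) * (w y - w x)) :
    ∀ x ∈ Kᶜ, w x ≤ 0 := by
  intro x hx
  have hbdd : BddAbove (w '' Kᶜ) :=
    ⟨M, forall_mem_image.2 fun y hy => (abs_le.1 (hwb y hy)).2⟩
  have hs := isLUB_csSup ⟨w x, mem_image_of_mem w hx⟩ hbdd
  have hws : ∀ y ∈ Kᶜ, w y ≤ sSup (w '' Kᶜ) := fun y hy => hs.1 (mem_image_of_mem w hy)
  have hs0 : sSup (w '' Kᶜ) ≤ 0 :=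
    nonpos_of_isLUB_of_mul_le_mul_sub hk (integral_nonneg hJ0) hs fun z hz =>
      (hineq z hz).trans <| setIntegral_comp_sub_left_mul_le hK.isClosed.measurableSet.compl
        hJint hJ0 (sub_nonneg.2 (hws z hz)) (fun y hy => sub_le_sub_right (hws y hy) _) z
  exact (hws x hx).trans hs0

/-- Nonlocal comparison (maximum) principle: if `L w - k w ≥ 0` on `ℝ^N \ K`
and `limsup_{|x|→∞} w ≤ 0`, then `w ≤ 0` on `ℝ^N \ K`. -/
theorem nonlocal_comparison_principle
    {N : ℕ} (hN : 1 ≤ N)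
    (K : Set (EuclideanSpace ℝ (Fin N))) (hK : IsCompact K)
    (J : EuclideanSpace ℝ (Fin N) → ℝ) (hJint : Integrable J) (hJ0 : ∀ z, 0 ≤ J z)
    (k : ℝ) (hk : 0 < k)
    (w : EuclideanSpace ℝ (Fin N) → ℝ)
    (hwc : ContinuousOn w Kᶜ)
    (M : ℝ) (hwb : ∀ x ∈ Kᶜ, |w x| ≤ M)
    (hineq : ∀ x ∈ Kᶜ, k * w x ≤ ∫ y in Kᶜ, J (x - y) * (w y - w x))
    (hlimsup : ∀ δ > 0, ∃ R : ℝ, ∀ x ∈ Kᶜ, R ≤ ‖x‖ → w x ≤ δ) :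
    ∀ x ∈ Kᶜ, w x ≤ 0 :=
  nonlocal_comparison_principle_general K hK J hJint hJ0 k hk w M hwb hineq
end

section
/- Let K = closure(B₂ \ B₁) ⊂ ℝ^N (the closed annulus with radii 1 and 2 centered at the origin), let J ∈ L¹(ℝ^N) be non-negative with unit mass and supp(J) ⊆ B_{1/2}, and let f : [0,1] → ℝ satisfy f(0) = f(1) = 0. Then the function u defined on ℝ^N \ K by u(x) = 1 for x ∈ ℝ^N \ B₂ and u(x) = 0 for x ∈ closure(B₁) satisfies ∫_{ℝ^N\K} J(x−y)(u(y)−u(x)) dy + f(u(x)) = 0 for every x ∈ ℝ^N \ K, and u(x) → 1 as |x| → ∞, yet u is not identically 1. -/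
open MeasureTheory Filter Set Metric

/-! Since `supp J ⊆ B_{1/2}` and the two components `B₁` and `ℝ^N \ closure B₂` of `ℝ^N \ K`
are at distance `1`, the integrand vanishes identically: `J (x - y) ≠ 0` forces `x` and `y` into
the same component, where `u` is constant. What is left of the equation is `f (u x)`, which
vanishes because `u` only takes the values `0` and `1`. -/

theorem closure_ball_sdiff_ball {E : Type*} [NormedAddCommGroup E] [NormedSpace ℝ E] {c : E}
    {r R : ℝ} (hr : 0 ≤ r) (hrR : r < R) :
    closure (ball c R \ ball c r) = closedBall c R \ ball c r := by
  refine (closure_minimal (sdiff_subset_sdiff_left ball_subset_closedBall)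
    (isClosed_closedBall.sdiff isOpen_ball)).antisymm fun x ⟨hxR, hxr⟩ ↦ ?_
  rcases (not_lt.mp (mt mem_ball.mpr hxr)).eq_or_lt with hx | hx
  · exact subset_closure ⟨mem_ball.mpr (hx ▸ hrR), hxr⟩
  · have hx' : x ∈ (closedBall c r)ᶜ ∩ closure (ball c R) := by
      rw [closure_ball c (by linarith)]
      exact ⟨fun h ↦ (mem_closedBall.mp h).not_gt hx, hxR⟩
    refine closure_mono ?_ (isClosed_closedBall.isOpen_compl.inter_closure hx')
    exact fun y ⟨hyr, hyR⟩ ↦ ⟨hyR, fun h ↦ hyr (ball_subset_closedBall h)⟩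

theorem mem_compl_closedBall_sdiff_ball {E : Type*} [PseudoMetricSpace E] {c x : E} {r R : ℝ} :
    x ∈ (closedBall c R \ ball c r)ᶜ ↔ dist x c < r ∨ R < dist x c := by
  rw [mem_compl_iff, Set.mem_sdiff, mem_closedBall, mem_ball, not_and_not_right, imp_iff_not_or,
    not_le, or_comm]

/-- Points on either side of the annulus `r ≤ ‖·‖ ≤ R` are more than `R - r` apart. -/
theorem norm_le_iff_of_mem_compl_closedBall_sdiff_ball {E : Type*} [SeminormedAddCommGroup E]
    {r R : ℝ} {x y : E} (hx : x ∈ (closedBall 0 R \ ball 0 r)ᶜ)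
    (hy : y ∈ (closedBall 0 R \ ball 0 r)ᶜ) (hxy : ‖x - y‖ ≤ R - r) : ‖x‖ ≤ r ↔ ‖y‖ ≤ r := by
  rw [mem_compl_closedBall_sdiff_ball, dist_zero_right] at hx hy
  have h₁ := norm_sub_norm_le x y
  have h₂ := norm_sub_norm_le y x
  rw [norm_sub_rev] at h₂
  rcases hx with hx | hx <;> rcases hy with hy | hy <;> constructor <;> intro <;> linarith

theorem setIntegral_kernel_mul_sub_eq_zero {E : Type*} [SeminormedAddCommGroup E]
    [MeasurableSpace E] {μ : Measure E} {Ω : Set E} {J u : E → ℝ} {δ : ℝ} {x : E}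
    (hJ : Function.support J ⊆ ball 0 δ) (hu : ∀ y ∈ Ω, ‖x - y‖ < δ → u y = u x) :
    ∫ y in Ω, J (x - y) * (u y - u x) ∂μ = 0 := by
  refine setIntegral_eq_zero_of_forall_eq_zero fun y hy ↦ ?_
  by_cases hJxy : J (x - y) = 0
  · rw [hJxy, zero_mul]
  · have hxy : ‖x - y‖ < δ := by
      simpa using hJ (Function.mem_support.mpr hJxy)
    rw [hu y hy hxy, sub_self, mul_zero]

theorem annulus_counterexample_general
    {N : ℕ}
    (K : Set (EuclideanSpace ℝ (Fin N)))
    (hKdef : K = closure (ball (0 : EuclideanSpace ℝ (Fin N)) 2 \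
      ball (0 : EuclideanSpace ℝ (Fin N)) 1))
    (J : EuclideanSpace ℝ (Fin N) → ℝ)
    (hJsupp : Function.support J ⊆ ball (0 : EuclideanSpace ℝ (Fin N)) (1/2))
    (f : ℝ → ℝ) (hf0 : f 0 = 0) (hf1 : f 1 = 0)
    (u : EuclideanSpace ℝ (Fin N) → ℝ)
    (hu : ∀ x, u x = if ‖x‖ ≤ 1 then 0 else 1) :
    (∀ x ∈ Kᶜ, (∫ y in Kᶜ, J (x - y) * (u y - u x)) + f (u x) = 0) ∧
      Tendsto u (cocompact (EuclideanSpace ℝ (Fin N))) (nhds 1) ∧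
      ¬ (∀ x ∈ Kᶜ, u x = 1) := by
  rw [closure_ball_sdiff_ball zero_le_one one_lt_two] at hKdef
  refine ⟨fun x hx ↦ ?_, ?_, fun h ↦ ?_⟩
  · have hlocal : ∀ y ∈ Kᶜ, ‖x - y‖ < 1 / 2 → u y = u x := fun y hy hxy ↦ by
      have hxy' : ‖x - y‖ ≤ 2 - 1 := by linarith
      rw [hKdef] at hx hy
      simp only [hu, norm_le_iff_of_mem_compl_closedBall_sdiff_ball hx hy hxy']
    rw [setIntegral_kernel_mul_sub_eq_zero hJsupp hlocal, zero_add, hu]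
    split_ifs <;> assumption
  · refine tendsto_const_nhds.congr' ?_
    filter_upwards [(isCompact_closedBall (0 : EuclideanSpace ℝ (Fin N)) 1).compl_mem_cocompact]
      with x hx
    rw [hu, if_neg (by simpa using hx)]
  · have h0 := h 0 (by simp [hKdef])
    simp [hu] at h0

/-- Counterexample on the annulus: with `K = closure(B₂ \ B₁)`, `supp J ⊆ B_{1/2}`,
`f(0) = f(1) = 0`, the function `u = 0` on `closure B₁` and `u = 1` outside `B₂`
solves the nonlocal equation on `ℝ^N \ K`, tends to `1` at infinity, but is not
identically `1`. -/
theorem annulus_counterexample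
    {N : ℕ} (hN : 1 ≤ N)
    (K : Set (EuclideanSpace ℝ (Fin N)))
    (hKdef : K = closure (ball (0 : EuclideanSpace ℝ (Fin N)) 2 \
      ball (0 : EuclideanSpace ℝ (Fin N)) 1))
    (J : EuclideanSpace ℝ (Fin N) → ℝ) (hJint : Integrable J) (hJ0 : ∀ z, 0 ≤ J z)
    (hJmass : ∫ z, J z = 1)
    (hJsupp : Function.support J ⊆ ball (0 : EuclideanSpace ℝ (Fin N)) (1/2))
    (f : ℝ → ℝ) (hf0 : f 0 = 0) (hf1 : f 1 = 0)
    (u : EuclideanSpace ℝ (Fin N) → ℝ)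
    (hu : ∀ x, u x = if ‖x‖ ≤ 1 then 0 else 1) :
    (∀ x ∈ Kᶜ, (∫ y in Kᶜ, J (x - y) * (u y - u x)) + f (u x) = 0) ∧
      Tendsto u (cocompact (EuclideanSpace ℝ (Fin N))) (nhds 1) ∧
      ¬ (∀ x ∈ Kᶜ, u x = 1) :=
  annulus_counterexample_general K hKdef J hJsupp f hf0 hf1 u hu
end

section
/- Let J : ℝ^N → [0,∞) be radially non-increasing (J(z) = J̃(|z|) with J̃ non-increasing), supported in B_{ε/2}, with unit mass, and let Λ ⊂ B_{ε/2} be a convex set containing 0. Then ∫_Λ J(y) dy ≥ |Λ ∩ B_{ε/2}| / |B_{ε/2}|. -/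
open MeasureTheory Filter Set Metric
open scoped Pointwise ENNReal

/-- Mass carried by a radially non-increasing kernel on a convex set containing
the origin: `∫_Λ J ≥ |Λ ∩ B_{ε/2}| / |B_{ε/2}|`. -/
theorem radial_kernel_convex_mass_bound
    {N : ℕ} (hN : 1 ≤ N) (ε : ℝ) (hε : 0 < ε)
    (J : EuclideanSpace ℝ (Fin N) → ℝ) (Jt : ℝ → ℝ)
    (hrad : ∀ z, J z = Jt ‖z‖) (hanti : AntitoneOn Jt (Set.Ici 0))
    (hJ0 : ∀ z, 0 ≤ J z) (hJint : Integrable J)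
    (hJsupp : Function.support J ⊆ ball (0 : EuclideanSpace ℝ (Fin N)) (ε / 2))
    (hJmass : ∫ z, J z = 1)
    (Λ : Set (EuclideanSpace ℝ (Fin N))) (hΛconv : Convex ℝ Λ)
    (hΛ0 : (0 : EuclideanSpace ℝ (Fin N)) ∈ Λ)
    (hΛsub : Λ ⊆ ball (0 : EuclideanSpace ℝ (Fin N)) (ε / 2))
    (hΛm : MeasurableSet Λ) :
    (volume (Λ ∩ ball (0 : EuclideanSpace ℝ (Fin N)) (ε / 2))).toReal /
        (volume (ball (0 : EuclideanSpace ℝ (Fin N)) (ε / 2))).toReal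
      ≤ ∫ z in Λ, J z := by
  haveI : Nontrivial (EuclideanSpace ℝ (Fin N)) := by
    apply Module.nontrivial_of_finrank_pos (R := ℝ)
    rw [finrank_euclideanSpace_fin]; omega
  set R : ℝ := ε / 2 with hR
  have hRpos : 0 < R := by positivity
  set B : Set (EuclideanSpace ℝ (Fin N)) := ball (0 : EuclideanSpace ℝ (Fin N)) R with hB
  -- measurability of J
  have hJmeas : Measurable J := by
    have hm : Antitone fun r : ℝ => Jt (max r 0) := fun a b hab =>
      hanti (Set.mem_Ici.mpr (le_max_right _ _)) (Set.mem_Ici.mpr (le_max_right _ _)) (max_le_max hab le_rfl)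
    have : J = (fun r : ℝ => Jt (max r 0)) ∘ fun z : EuclideanSpace ℝ (Fin N) => ‖z‖ := by
      funext z; simp [hrad z, max_eq_left (norm_nonneg z)]
    rw [this]
    exact hm.measurable.comp measurable_norm
  -- the superlevel sets
  set S : ℝ → Set (EuclideanSpace ℝ (Fin N)) := fun t => {a | t < J a} with hS
  have hSmeas : ∀ t, MeasurableSet (S t) := fun t => measurableSet_lt measurable_const hJmeas
  have hSsub : ∀ t, 0 < t → S t ⊆ B := by
    intro t ht z hz
    have hz' : t < J z := hz
    exact hJsupp (by simp only [Function.mem_support]; exact ne_of_gt (ht.trans hz'))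
  have hvolB_ne : volume B ≠ 0 := (measure_ball_pos volume _ hRpos).ne'
  have hvolB_top : volume B ≠ ⊤ := measure_ball_lt_top.ne
  have hvolB : volume B = ENNReal.ofReal (R ^ N) * volume (ball (0 : EuclideanSpace ℝ (Fin N)) 1) := by
    rw [hB, Measure.addHaar_ball volume _ hRpos.le, finrank_euclideanSpace_fin]
  set c : ℝ≥0∞ := volume Λ / volume B with hc
  have hc_top : c ≠ ⊤ := by
    exact (ENNReal.div_lt_top (ne_top_of_le_ne_top hvolB_top (measure_mono hΛsub)) hvolB_ne).ne
  -- key per-level bound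
  have key : ∀ t ∈ Ioi (0:ℝ), volume (S t) * c ≤ volume (S t ∩ Λ) := by
    intro t ht
    rw [hc, ← mul_div_assoc]
    apply ENNReal.div_le_of_le_mul
    -- show vol (S t) * vol Λ ≤ vol (S t ∩ Λ) * vol B
    rcases Set.eq_empty_or_nonempty (S t) with he | ⟨z₀, hz₀⟩
    · simp [he]
    set A : Set ℝ := (fun z : EuclideanSpace ℝ (Fin N) => ‖z‖) '' S t with hA
    have hAne : A.Nonempty := ⟨‖z₀‖, z₀, hz₀, rfl⟩
    have hAbdd : BddAbove A := ⟨R, by rintro x ⟨z, hz, rfl⟩; exact (mem_ball_zero_iff.mp (hSsub t ht hz)).le⟩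
    set r : ℝ := sSup A with hr
    have hr_nonneg : 0 ≤ r := le_trans (norm_nonneg z₀) (le_csSup hAbdd ⟨z₀, hz₀, rfl⟩)
    have hrR : r ≤ R := csSup_le hAne (by rintro x ⟨z, hz, rfl⟩; exact (mem_ball_zero_iff.mp (hSsub t ht hz)).le)
    -- S t ⊆ closedBall 0 r
    have hSup : S t ⊆ closedBall (0 : EuclideanSpace ℝ (Fin N)) r := by
      intro z hz; rw [mem_closedBall_zero_iff]; exact le_csSup hAbdd ⟨z, hz, rfl⟩
    have hvolS : volume (S t) ≤ ENNReal.ofReal (r ^ N) * volume (ball (0 : EuclideanSpace ℝ (Fin N)) 1) := by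
      calc volume (S t) ≤ volume (closedBall (0 : EuclideanSpace ℝ (Fin N)) r) := measure_mono hSup
        _ = ENNReal.ofReal (r ^ N) * volume (ball (0 : EuclideanSpace ℝ (Fin N)) 1) := by
            rw [Measure.addHaar_closedBall volume _ hr_nonneg, finrank_euclideanSpace_fin]
    rcases eq_or_lt_of_le hr_nonneg with hr0 | hrpos
    · -- r = 0 : S t has measure 0
      have : volume (S t) = 0 := by
        refine le_antisymm ?_ zero_le
        rw [← hr0] at hvolS
        simpa [zero_pow (by omega : N ≠ 0)] using hvolS
      simp [this]
    -- r > 0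
    have hball : ball (0 : EuclideanSpace ℝ (Fin N)) r ⊆ S t := by
      intro w hw
      rw [mem_ball_zero_iff] at hw
      obtain ⟨x, ⟨z, hz, rfl⟩, hwx⟩ := exists_lt_of_lt_csSup hAne hw
      have hz' : t < J z := hz
      have hle : Jt ‖z‖ ≤ Jt ‖w‖ := hanti (norm_nonneg w) (norm_nonneg z) hwx.le
      show t < J w
      rw [hrad] at hz' ⊢
      exact hz'.trans_le hle
    have hscale : (r / R) • Λ ⊆ S t ∩ Λ := by
      rintro _ ⟨x, hx, rfl⟩
      have h01 : 0 ≤ r / R := div_nonneg hr_nonneg hRpos.le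
      constructor
      · apply hball
        rw [mem_ball_zero_iff, norm_smul, Real.norm_eq_abs, abs_of_nonneg h01]
        calc r / R * ‖x‖ < r / R * R :=
              mul_lt_mul_of_pos_left (mem_ball_zero_iff.mp (hΛsub hx)) (div_pos hrpos hRpos)
          _ = r := div_mul_cancel₀ _ hRpos.ne'
      · have := hΛconv hx hΛ0 h01 (by linarith [div_le_one_of_le₀ hrR hRpos.le] : 0 ≤ 1 - r / R)
          (by ring)
        simpa using this
    have hvolscale : ENNReal.ofReal ((r / R) ^ N) * volume Λ ≤ volume (S t ∩ Λ) := by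
      calc ENNReal.ofReal ((r / R) ^ N) * volume Λ
          = volume ((r / R) • Λ) := by
            rw [Measure.addHaar_smul, finrank_euclideanSpace_fin,
              abs_of_nonneg (by positivity)]
        _ ≤ volume (S t ∩ Λ) := measure_mono hscale
    calc volume (S t) * volume Λ
        ≤ ENNReal.ofReal (r ^ N) * volume (ball (0 : EuclideanSpace ℝ (Fin N)) 1) * volume Λ :=
          mul_le_mul_left hvolS _
      _ = (ENNReal.ofReal ((r / R) ^ N) * volume Λ) * (ENNReal.ofReal (R ^ N) * volume (ball (0 : EuclideanSpace ℝ (Fin N)) 1)) := by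
          have h9 : ENNReal.ofReal (r ^ N) = ENNReal.ofReal ((r / R) ^ N) * ENNReal.ofReal (R ^ N) := by
            rw [← ENNReal.ofReal_mul (by positivity), ← mul_pow, div_mul_cancel₀ _ hRpos.ne']
          rw [h9]; ring
      _ ≤ volume (S t ∩ Λ) * volume B := by
          rw [hvolB]; exact mul_le_mul_left hvolscale _
  -- layer cake on the whole space : total mass 1
  have hae : 0 ≤ᵐ[(volume : Measure (EuclideanSpace ℝ (Fin N)))] J := Filter.Eventually.of_forall hJ0
  have htot : ∫⁻ t in Ioi (0:ℝ), volume (S t) = 1 := by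
    rw [← lintegral_eq_lintegral_meas_lt volume hae hJmeas.aemeasurable,
      ← ofReal_integral_eq_lintegral_ofReal hJint hae, hJmass, ENNReal.ofReal_one]
  -- layer cake on Λ
  have hrestr : ∫⁻ z in Λ, ENNReal.ofReal (J z) = ∫⁻ t in Ioi (0:ℝ), volume (S t ∩ Λ) := by
    rw [lintegral_eq_lintegral_meas_lt (volume.restrict Λ)
      (Filter.Eventually.of_forall hJ0) hJmeas.aemeasurable]
    refine lintegral_congr fun t => ?_
    rw [Measure.restrict_apply (hSmeas t)]
  have hmain : c ≤ ∫⁻ z in Λ, ENNReal.ofReal (J z) := by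
    calc c = (∫⁻ t in Ioi (0:ℝ), volume (S t)) * c := by rw [htot, one_mul]
      _ = ∫⁻ t in Ioi (0:ℝ), volume (S t) * c := (lintegral_mul_const' c _ hc_top).symm
      _ ≤ ∫⁻ t in Ioi (0:ℝ), volume (S t ∩ Λ) := by
          refine setLIntegral_mono' measurableSet_Ioi key
      _ = ∫⁻ z in Λ, ENNReal.ofReal (J z) := hrestr.symm
  have hfin : ∫⁻ z in Λ, ENNReal.ofReal (J z) ≠ ⊤ := by
    have h1 : ∫⁻ z in Λ, ENNReal.ofReal (J z) ≤ ∫⁻ z, ENNReal.ofReal (J z) :=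
      setLIntegral_le_lintegral _ _
    have h2 : ∫⁻ z : EuclideanSpace ℝ (Fin N), ENNReal.ofReal (J z) = 1 := by
      rw [← ofReal_integral_eq_lintegral_ofReal hJint hae, hJmass, ENNReal.ofReal_one]
    exact ne_top_of_le_ne_top (by simp) (h2 ▸ h1)
  have hintΛ : ∫ z in Λ, J z = (∫⁻ z in Λ, ENNReal.ofReal (J z)).toReal :=
    integral_eq_lintegral_of_nonneg_ae (Filter.Eventually.of_forall hJ0)
      (hJint.restrict.aestronglyMeasurable)
  rw [Set.inter_eq_left.mpr hΛsub, hintΛ, ← ENNReal.toReal_div]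
  exact ENNReal.toReal_mono hfin hmain
end

section
/- Let K ⊂ ℝ^N be compact, J ∈ L¹(ℝ^N) non-negative, k > 0, and f : ℝ → ℝ continuous such that s ↦ −ks − f(s) is non-increasing on [0,1]. Suppose (u_j)_{j≥0} is a sequence of functions on ℝ^N \ K with values in [0,1] that is pointwise non-increasing in j and satisfies, for each j ≥ 0 and each x, ∫_{ℝ^N\K} J(x−y)(u_{j+1}(y) − u_{j+1}(x)) dy − k u_{j+1}(x) = −k u_j(x) − f(u_j(x)). Then the pointwise limit u(x) := lim_{j→∞} u_j(x) exists, takes values in [0,1], and satisfies ∫_{ℝ^N\K} J(x−y)(u(y) − u(x)) dy + f(u(x)) = 0 for every x ∈ ℝ^N \ K. -/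
open MeasureTheory Filter Set Metric

/-- Convergence of the monotone iterative scheme: if `(u_j)` is a pointwise
non-increasing sequence of `[0,1]`-valued functions satisfying the iteration
`L u_{j+1} − k u_{j+1} = −k u_j − f(u_j)` on `ℝ^N \ K`, then the pointwise
limit `u` exists, takes values in `[0,1]`, and solves `L u + f(u) = 0`. -/
theorem monotone_scheme_limit_solves
    {N : ℕ} (K : Set (EuclideanSpace ℝ (Fin N))) (hK : IsCompact K)
    (J : EuclideanSpace ℝ (Fin N) → ℝ) (hJ0 : ∀ z, 0 ≤ J z) (hJint : Integrable J)
    (k : ℝ) (hk : 0 < k)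
    (f : ℝ → ℝ) (hf : Continuous f)
    (hmono : AntitoneOn (fun s => -(k * s) - f s) (Set.Icc 0 1))
    (u : ℕ → EuclideanSpace ℝ (Fin N) → ℝ) (hmeas : ∀ j, Measurable (u j))
    (hrange : ∀ j, ∀ x ∈ Kᶜ, u j x ∈ Set.Icc (0:ℝ) 1)
    (hdec : ∀ x ∈ Kᶜ, ∀ j, u (j + 1) x ≤ u j x)
    (hrec : ∀ j, ∀ x ∈ Kᶜ,
      (∫ y in Kᶜ, J (x - y) * (u (j + 1) y - u (j + 1) x)) - k * u (j + 1) x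
        = -(k * u j x) - f (u j x)) :
    ∃ ulim : EuclideanSpace ℝ (Fin N) → ℝ,
      (∀ x ∈ Kᶜ, Tendsto (fun j => u j x) atTop (nhds (ulim x))) ∧
      (∀ x ∈ Kᶜ, ulim x ∈ Set.Icc (0:ℝ) 1) ∧
      ∀ x ∈ Kᶜ, (∫ y in Kᶜ, J (x - y) * (ulim y - ulim x)) + f (ulim x) = 0 := by
  classical
  set ulim : EuclideanSpace ℝ (Fin N) → ℝ := fun x => ⨅ j, u j x with hulim
  have hanti : ∀ x ∈ Kᶜ, Antitone (fun j => u j x) := fun x hx =>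
    antitone_nat_of_succ_le (fun j => hdec x hx j)
  have hbdd : ∀ x ∈ Kᶜ, BddBelow (Set.range (fun j => u j x)) := by
    intro x hx
    exact ⟨0, by rintro _ ⟨j, rfl⟩; exact (hrange j x hx).1⟩
  have htend : ∀ x ∈ Kᶜ, Tendsto (fun j => u j x) atTop (nhds (ulim x)) := by
    intro x hx
    exact tendsto_atTop_ciInf (hanti x hx) (hbdd x hx)
  have hrangeL : ∀ x ∈ Kᶜ, ulim x ∈ Set.Icc (0:ℝ) 1 := by
    intro x hx
    constructor
    · exact le_ciInf fun j => (hrange j x hx).1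
    · exact le_trans (ciInf_le (hbdd x hx) 0) (hrange 0 x hx).2
  refine ⟨ulim, htend, hrangeL, ?_⟩
  intro x hx
  have hKc : MeasurableSet (Kᶜ : Set (EuclideanSpace ℝ (Fin N))) :=
    hK.isClosed.measurableSet.compl
  -- the shifted kernel is integrable
  have hJx : Integrable (fun y : EuclideanSpace ℝ (Fin N) => J (x - y)) := by
    exact (integrable_comp_sub_left J x).mpr hJint
  have hJxr : Integrable (fun y => J (x - y)) (volume.restrict Kᶜ) := hJx.restrict
  -- measurability of ulim
  have hmeasL : Measurable ulim := Measurable.iInf fun j => hmeas j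
  -- dominated convergence
  have hDCT : Tendsto (fun j => ∫ y in Kᶜ, J (x - y) * (u (j + 1) y - u (j + 1) x))
      atTop (nhds (∫ y in Kᶜ, J (x - y) * (ulim y - ulim x))) := by
    apply tendsto_integral_of_dominated_convergence (fun y => J (x - y)) _ hJxr
    · intro j
      filter_upwards [ae_restrict_mem hKc] with y hy
      have h1 := hrange (j + 1) y hy
      have h2 := hrange (j + 1) x hx
      have : |u (j + 1) y - u (j + 1) x| ≤ 1 := by
        rw [abs_le]; constructor <;> nlinarith [h1.1, h1.2, h2.1, h2.2]
      calc ‖J (x - y) * (u (j + 1) y - u (j + 1) x)‖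
          = J (x - y) * |u (j + 1) y - u (j + 1) x| := by
            rw [norm_mul, Real.norm_eq_abs, Real.norm_eq_abs, abs_of_nonneg (hJ0 _)]
        _ ≤ J (x - y) * 1 := by
            exact mul_le_mul_of_nonneg_left this (hJ0 _)
        _ = J (x - y) := by ring
    · filter_upwards [ae_restrict_mem hKc] with y hy
      have hy' : Tendsto (fun j => u (j + 1) y) atTop (nhds (ulim y)) :=
        (htend y hy).comp (tendsto_add_atTop_nat 1)
      have hx' : Tendsto (fun j => u (j + 1) x) atTop (nhds (ulim x)) :=
        (htend x hx).comp (tendsto_add_atTop_nat 1)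
      exact tendsto_const_nhds.mul (hy'.sub hx')
    · intro j
      exact (hJx.aestronglyMeasurable.restrict.mul
        (((hmeas (j + 1)).sub measurable_const).aestronglyMeasurable.restrict))
  have hxlim : Tendsto (fun j => u (j + 1) x) atTop (nhds (ulim x)) :=
    (htend x hx).comp (tendsto_add_atTop_nat 1)
  have hLHS : Tendsto (fun j =>
      (∫ y in Kᶜ, J (x - y) * (u (j + 1) y - u (j + 1) x)) - k * u (j + 1) x)
      atTop (nhds ((∫ y in Kᶜ, J (x - y) * (ulim y - ulim x)) - k * ulim x)) :=
    hDCT.sub (tendsto_const_nhds.mul hxlim)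
  have hRHS : Tendsto (fun j => -(k * u j x) - f (u j x)) atTop
      (nhds (-(k * ulim x) - f (ulim x))) :=
    (tendsto_const_nhds.mul (htend x hx)).neg.sub ((hf.tendsto _).comp (htend x hx))
  have heq : (∫ y in Kᶜ, J (x - y) * (ulim y - ulim x)) - k * ulim x
      = -(k * ulim x) - f (ulim x) := by
    apply tendsto_nhds_unique _ hRHS
    have : (fun j => -(k * u j x) - f (u j x)) =
        fun j => (∫ y in Kᶜ, J (x - y) * (u (j + 1) y - u (j + 1) x)) - k * u (j + 1) x := by
      funext j; exact (hrec j x hx).symm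
    rw [this]; exact hLHS
  linarith [heq]
end
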